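/- arXiv:2402.07341 — 3 statements merged into one kernel-verified Lean document; each statement's English description precedes it below -/
import Mathlib

section
/- (Elliptical potential lemma.) Let x_1, …, x_t ∈ ℝ^d be vectors with ‖x_s‖₂ ≤ X for all s ∈ [t], let λ > 0, and let V_s = λI + Σ_{r=1}^s x_r x_rᵀ. Then Σ_{s=1}^t ‖x_s‖²_{V_s⁻¹} ≤ ln(det(V_t)/det(λI)), and moreover ln(det(V_t)/det(λI)) ≤ d ln(1 + X²t/(dλ)). -/
open Matrix Finset Real

/-!
Write `q_s = x_sᵀ V_s⁻¹ x_s`. Since `V_{s-1} = V_s - x_s x_sᵀ`, the matrix determinant lemma gives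
`det V_{s-1} = det V_s · (1 - q_s)`, so `q_s = 1 - det V_{s-1} / det V_s ≤ log (det V_s / det V_{s-1})`
by `1 - y ≤ -log y`; summing over `s` telescopes to the first bound. For the second, AM-GM on the
eigenvalues gives `det V_t ≤ (tr V_t / d)^d`, and `tr V_t = dλ + Σ_s ‖x_s‖² ≤ dλ + t X²`.
-/

theorem Real.prod_le_sum_div_card_pow {ι : Type*} (s : Finset ι) {z : ι → ℝ}
    (hz : ∀ i ∈ s, 0 ≤ z i) : ∏ i ∈ s, z i ≤ ((∑ i ∈ s, z i) / #s) ^ #s := by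
  rcases s.eq_empty_or_nonempty with rfl | hs
  · simp
  have hcard : #s ≠ 0 := hs.card_ne_zero
  have amgm := geom_mean_le_arith_mean_weighted s (fun _ => (#s : ℝ)⁻¹) z
    (fun _ _ => by positivity) (by simp [hcard]) hz
  calc ∏ i ∈ s, z i = (∏ i ∈ s, z i ^ (#s : ℝ)⁻¹) ^ #s := by
        rw [← prod_pow]
        exact prod_congr rfl fun i hi => (rpow_inv_natCast_pow (hz i hi) hcard).symm
    _ ≤ (∑ i ∈ s, (#s : ℝ)⁻¹ * z i) ^ #s :=
        pow_le_pow_left₀ (prod_nonneg fun i hi => rpow_nonneg (hz i hi) _) amgm _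
    _ = ((∑ i ∈ s, z i) / #s) ^ #s := by rw [← mul_sum, inv_mul_eq_div]

theorem Finset.sum_Icc_le_sub_of_le_sub {M : Type*} [AddCommGroup M] [PartialOrder M]
    [IsOrderedAddMonoid M] {f g : ℕ → M} (h : ∀ s, f (s + 1) ≤ g (s + 1) - g s) (n : ℕ) :
    ∑ s ∈ Icc 1 n, f s ≤ g n - g 0 := by
  induction n with
  | zero => simp
  | succ n ih =>
    rw [sum_Icc_succ_top (by omega)]
    calc ∑ s ∈ Icc 1 n, f s + f (n + 1) ≤ g n - g 0 + (g (n + 1) - g n) := add_le_add ih (h n)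
      _ = g (n + 1) - g 0 := by abel

namespace Matrix

variable {n : Type*} [Fintype n]

theorem trace_sum_vecMulVec_self_le {ι : Type*} (s : Finset ι) (x : ι → n → ℝ) {X : ℝ}
    (hX : ∀ r ∈ s, √(x r ⬝ᵥ x r) ≤ X) : (∑ r ∈ s, vecMulVec (x r) (x r)).trace ≤ #s * X ^ 2 := by
  rw [trace_sum, ← nsmul_eq_mul, ← sum_const]
  exact sum_le_sum fun r hr => trace_vecMulVec (x r) (x r) ▸ (sqrt_le_iff.mp (hX r hr)).2

variable [DecidableEq n]

theorem det_add_vecMulVec {R : Type*} [CommRing R] {A : Matrix n n R} (hA : IsUnit A.det)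
    (u v : n → R) : (A + vecMulVec u v).det = A.det * (1 + v ⬝ᵥ A⁻¹ *ᵥ u) := by
  rw [vecMulVec_eq Unit, det_add_replicateCol_mul_replicateRow hA,
    det_unique (1 + replicateRow Unit v * A⁻¹ * replicateCol Unit u), add_apply, one_apply_eq,
    Matrix.mul_assoc, ← replicateCol_mulVec, replicateRow_mul_replicateCol_apply]

theorem PosSemidef.det_le_trace_div_card_pow {A : Matrix n n ℝ} (hA : A.PosSemidef) :
    A.det ≤ (A.trace / Fintype.card n) ^ Fintype.card n := by
  rw [hA.isHermitian.det_eq_prod_eigenvalues, hA.isHermitian.trace_eq_sum_eigenvalues]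
  simpa using Real.prod_le_sum_div_card_pow univ fun i _ => hA.eigenvalues_nonneg i

theorem PosDef.dotProduct_inv_mulVec_le_log_det_sub {A : Matrix n n ℝ} (hA : A.PosDef)
    (v : n → ℝ) :
    v ⬝ᵥ (A + vecMulVec v v)⁻¹ *ᵥ v ≤ log (A + vecMulVec v v).det - log A.det := by
  set B := A + vecMulVec v v
  have hB : B.PosDef := hA.add_posSemidef (by simpa using posSemidef_vecMulVec_self_star v)
  have hratio : A.det / B.det = 1 - v ⬝ᵥ B⁻¹ *ᵥ v := by
    calc A.det / B.det = (B + vecMulVec (-v) v).det / B.det := by simp [B]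
      _ = 1 - v ⬝ᵥ B⁻¹ *ᵥ v := by
        rw [det_add_vecMulVec hB.det_pos.ne'.isUnit, mulVec_neg, dotProduct_neg, ← sub_eq_add_neg,
          mul_div_cancel_left₀ _ hB.det_pos.ne']
  have hlog := log_le_sub_one_of_pos (div_pos hA.det_pos hB.det_pos)
  rw [log_div hA.det_pos.ne' hB.det_pos.ne', hratio] at hlog
  linarith

theorem PosDef.log_det_div_pow_le {A : Matrix n n ℝ} (hA : A.PosDef) {lam c : ℝ} (hlam : 0 < lam)
    (htr : A.trace ≤ Fintype.card n * lam + c) :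
    log (A.det / lam ^ Fintype.card n) ≤ Fintype.card n * log (1 + c / (Fintype.card n * lam)) := by
  rcases isEmpty_or_nonempty n with _ | _
  · simp
  set k := Fintype.card n
  have hk : 0 < k := Fintype.card_pos
  have hmean : A.trace / k ≤ lam * (1 + c / (k * lam)) := by
    rw [div_le_iff₀ (by positivity)]
    calc A.trace ≤ k * lam + c := htr
      _ = lam * (1 + c / (k * lam)) * k := by field_simp
  rw [← log_pow]
  refine log_le_log (div_pos hA.det_pos (by positivity)) ?_
  rw [div_le_iff₀ (by positivity), ← mul_pow, mul_comm _ lam]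
  calc A.det ≤ (A.trace / k) ^ k := hA.posSemidef.det_le_trace_div_card_pow
    _ ≤ (lam * (1 + c / (k * lam))) ^ k :=
      pow_le_pow_left₀ (div_nonneg hA.posSemidef.trace_nonneg k.cast_nonneg) hmean k

end Matrix

theorem elliptical_potential_general
    {d : ℕ} (t : ℕ) (x : ℕ → Fin d → ℝ) (X lam : ℝ)
    (hX : ∀ s ∈ Finset.Icc 1 t, Real.sqrt (x s ⬝ᵥ x s) ≤ X)
    (hlam : 0 < lam)
    (V : ℕ → Matrix (Fin d) (Fin d) ℝ)
    (hV : ∀ s, V s = lam • (1 : Matrix (Fin d) (Fin d) ℝ)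
        + ∑ r ∈ Finset.Icc 1 s, vecMulVec (x r) (x r)) :
    (∑ s ∈ Finset.Icc 1 t, x s ⬝ᵥ (V s)⁻¹.mulVec (x s)
        ≤ Real.log ((V t).det / (lam • (1 : Matrix (Fin d) (Fin d) ℝ)).det))
    ∧ Real.log ((V t).det / (lam • (1 : Matrix (Fin d) (Fin d) ℝ)).det)
        ≤ d * Real.log (1 + X^2 * t / (d * lam)) := by
  have hV0 : V 0 = lam • 1 := by simp [hV 0]
  have hVsucc (s : ℕ) : V (s + 1) = V s + vecMulVec (x (s + 1)) (x (s + 1)) := by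
    rw [hV, hV, sum_Icc_succ_top (by omega), add_assoc]
  have hVpos (s : ℕ) : (V s).PosDef := hV s ▸ (PosDef.one.smul hlam).add_posSemidef
    (posSemidef_sum _ fun r _ => by simpa using posSemidef_vecMulVec_self_star (x r))
  refine ⟨?_, ?_⟩
  · rw [← hV0, log_div (hVpos t).det_pos.ne' (hVpos 0).det_pos.ne']
    exact sum_Icc_le_sub_of_le_sub (g := fun s => log (V s).det)
      (fun s => hVsucc s ▸ (hVpos s).dotProduct_inv_mulVec_le_log_det_sub (x (s + 1))) t
  · have htrace : (V t).trace ≤ d * lam + X ^ 2 * t := by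
      have hgram := trace_sum_vecMulVec_self_le _ x hX
      rw [Nat.card_Icc, Nat.add_sub_cancel] at hgram
      rw [hV, trace_add, trace_smul, trace_one, Fintype.card_fin, smul_eq_mul]
      linarith
    simpa using (hVpos t).log_det_div_pow_le hlam (by simpa using htrace)

/-- the elliptical potential lemma.  For vectors `x_1,…,x_t` with
`‖x_s‖₂ ≤ X`, `λ > 0` and `V_s = λI + Σ_{r=1}^s x_r x_rᵀ`,
`Σ_{s=1}^t ‖x_s‖²_{V_s⁻¹} ≤ ln(det V_t / det(λI))` and
`ln(det V_t / det(λI)) ≤ d ln(1 + X²t/(dλ))`. -/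
theorem elliptical_potential
    {d : ℕ} (hd : 0 < d) (t : ℕ) (x : ℕ → Fin d → ℝ) (X lam : ℝ)
    (hX : ∀ s ∈ Finset.Icc 1 t, Real.sqrt (x s ⬝ᵥ x s) ≤ X)
    (hlam : 0 < lam)
    (V : ℕ → Matrix (Fin d) (Fin d) ℝ)
    (hV : ∀ s, V s = lam • (1 : Matrix (Fin d) (Fin d) ℝ)
        + ∑ r ∈ Finset.Icc 1 s, vecMulVec (x r) (x r)) :
    (∑ s ∈ Finset.Icc 1 t, x s ⬝ᵥ (V s)⁻¹.mulVec (x s)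
        ≤ Real.log ((V t).det / (lam • (1 : Matrix (Fin d) (Fin d) ℝ)).det))
    ∧ Real.log ((V t).det / (lam • (1 : Matrix (Fin d) (Fin d) ℝ)).det)
        ≤ d * Real.log (1 + X^2 * t / (d * lam)) :=
  elliptical_potential_general t x X lam hX hlam V hV
end

section
/- Define l̄nln(x) := ln ln(max{e, x}) and l̄nln²(x) := (l̄nln(x))². Let x ≥ e and a, b > 0, with the convention ln ln(x) = 0 for x ≤ e. If x ≥ a + 2b(e + l̄nln²(2a) + l̄nln²(2b)), then x ≥ a + b (ln ln x)². -/
open Real Set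

/-! For `p > 0` we have `2 log p ≤ p`, so `p ↦ p - (log p)²` is monotone there. Applied to
`p = max 1 (log x)` this gives `lnlnSq v ≤ lnlnSq w + log (v / w)` for `0 < w ≤ v`, where
`lnlnSq x = (log log (max e x))²`. Put `t = (x - a) / b ≥ 2 (e + lnlnSq (2a) + lnlnSq (2b))`.
Since `x ≤ 2 max a (x - a)`, either `lnlnSq x ≤ lnlnSq (2a) ≤ t`, or
`lnlnSq x ≤ lnlnSq (2(x - a)) ≤ lnlnSq (2b) + log t ≤ t / 2 + t / 2`. -/

lemma two_mul_log_le_self {p : ℝ} (hp : 0 < p) : 2 * log p ≤ p := by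
  have h := exp_one_mul_le_exp (x := log p)
  rw [exp_log hp] at h
  nlinarith [exp_one_gt_d9, log_nonneg_iff hp]

lemma monotoneOn_sub_log_sq : MonotoneOn (fun p : ℝ ↦ p - log p ^ 2) (Ioi 0) := by
  refine monotoneOn_of_hasDerivWithinAt_nonneg (convex_Ioi 0)
    (f' := fun p ↦ 1 - 2 * log p * p⁻¹) ?_ (fun p hp ↦ ?_) (fun p hp ↦ ?_)
  · exact continuousOn_id.sub ((continuousOn_log.mono fun p hp ↦ ne_of_gt hp).pow 2)
  · rw [interior_Ioi] at hp ⊢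
    refine (((hasDerivAt_id' p).fun_sub
      ((hasDerivAt_log (ne_of_gt hp)).fun_pow 2)).congr_deriv ?_).hasDerivWithinAt
    norm_num
  · rw [interior_Ioi] at hp
    have hp : 0 < p := hp
    rw [sub_nonneg, ← div_eq_mul_inv, div_le_one hp]
    exact two_mul_log_le_self hp

noncomputable def lnlnSq (x : ℝ) : ℝ := log (log (max (exp 1) x)) ^ 2

lemma lnlnSq_nonneg (x : ℝ) : 0 ≤ lnlnSq x := sq_nonneg _

lemma lnlnSq_of_exp_one_le {x : ℝ} (hx : exp 1 ≤ x) : lnlnSq x = log (log x) ^ 2 := by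
  rw [lnlnSq, max_eq_right hx]

lemma log_max_exp_one {x : ℝ} (hx : 0 < x) : log (max (exp 1) x) = max 1 (log x) := by
  rcases le_total (exp 1) x with h | h
  · rw [max_eq_right h, max_eq_right (by simpa using log_le_log (exp_pos 1) h)]
  · rw [max_eq_left h, max_eq_left (by simpa using log_le_log hx h), log_exp]

lemma lnlnSq_monotone : Monotone lnlnSq := fun w v hwv ↦ by
  have hw : 1 ≤ log (max (exp 1) w) := by simpa using log_le_log (exp_pos 1) (le_max_left _ w)
  exact pow_le_pow_left₀ (log_nonneg hw) (log_le_log (by linarith) (log_le_log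
    (lt_of_lt_of_le (exp_pos 1) (le_max_left _ w)) (max_le_max_left _ hwv))) 2

lemma lnlnSq_le_add_log_div {w v : ℝ} (hw : 0 < w) (hwv : w ≤ v) :
    lnlnSq v ≤ lnlnSq w + log (v / w) := by
  have hv : 0 < v := hw.trans_le hwv
  have hlog : log w ≤ log v := log_le_log hw hwv
  have key := monotoneOn_sub_log_sq (zero_lt_one.trans_le (le_max_left 1 (log w)))
    (zero_lt_one.trans_le (le_max_left 1 (log v))) (max_le_max_left 1 hlog)
  have hmax : max 1 (log v) - max 1 (log w) ≤ log v - log w := by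
    simp only [max_def]
    split_ifs <;> linarith
  simp only [lnlnSq, log_max_exp_one hw, log_max_exp_one hv] at key ⊢
  rw [log_div hv.ne' hw.ne']
  linarith

theorem lnln_inequality_general (x a b : ℝ) (hx : Real.exp 1 ≤ x) (hb : 0 < b)
    (h : a + 2 * b * (Real.exp 1
        + (Real.log (Real.log (max (Real.exp 1) (2 * a))))^2
        + (Real.log (Real.log (max (Real.exp 1) (2 * b))))^2) ≤ x) :
    a + b * (Real.log (Real.log x))^2 ≤ x := by
  change a + 2 * b * (exp 1 + lnlnSq (2 * a) + lnlnSq (2 * b)) ≤ x at h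
  rw [← lnlnSq_of_exp_one_le hx, ← le_sub_iff_add_le', ← le_div_iff₀' hb]
  have hE : 2 * (exp 1 + lnlnSq (2 * a) + lnlnSq (2 * b)) ≤ (x - a) / b := by
    rw [le_div_iff₀ hb]; linarith
  have := add_one_le_exp 1
  have := lnlnSq_nonneg (2 * a)
  have := lnlnSq_nonneg (2 * b)
  rcases le_total (x - a) a with hle | hge
  · linarith [lnlnSq_monotone (show x ≤ 2 * a by linarith)]
  · have hb_le : b ≤ x - a := by rw [← one_le_div hb]; linarith
    have hlog := two_mul_log_le_self (show 0 < (x - a) / b by linarith)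
    calc lnlnSq x ≤ lnlnSq (2 * (x - a)) := lnlnSq_monotone (by linarith)
      _ ≤ lnlnSq (2 * b) + log (2 * (x - a) / (2 * b)) :=
        lnlnSq_le_add_log_div (by linarith) (by linarith)
      _ = lnlnSq (2 * b) + log ((x - a) / b) := by rw [mul_div_mul_left _ _ two_ne_zero]
      _ ≤ (x - a) / b := by linarith

/-- a deterministic iterated-logarithm inequality.
`l̄nln x = ln ln (max e x)`. If `x ≥ e`, `a, b > 0` and
`x ≥ a + 2b(e + l̄nln²(2a) + l̄nln²(2b))`, then `x ≥ a + b (ln ln x)²`. -/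
theorem lnln_inequality (x a b : ℝ) (hx : Real.exp 1 ≤ x) (ha : 0 < a) (hb : 0 < b)
    (h : a + 2 * b * (Real.exp 1
        + (Real.log (Real.log (max (Real.exp 1) (2 * a))))^2
        + (Real.log (Real.log (max (Real.exp 1) (2 * b))))^2) ≤ x) :
    a + b * (Real.log (Real.log x))^2 ≤ x :=
  lnln_inequality_general x a b hx hb h
end

section
/- (Regret equality for online ridge regression.) Let z_1, …, z_t ∈ ℝ^d and u_1, …, u_t ∈ ℝ be arbitrary, λ > 0, f_s(θ) = ½(⟨z_s,θ⟩ − u_s)², θ̂_s = argmin_θ Σ_{r=1}^s f_r(θ) + (λ/2)‖θ‖² (with θ̂_0 = 0), and Σ_s = λI + Σ_{r=1}^s z_r z_rᵀ. Then for every θ* ∈ ℝ^d: Σ_{s=1}^t (f_s(θ̂_{s−1}) − f_s(θ*)) = (λ/2)‖θ*‖² + Σ_{s=1}^t f_s(θ̂_{s−1}) ‖z_s‖²_{Σ_s⁻¹} − ½‖θ* − θ̂_t‖²_{Σ_t}. -/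
/-! The ridge objective `F_s(θ) = ∑_{r ≤ s} f_r(θ) + (λ/2)‖θ‖²` is the quadratic
`½ θᵀΣ_sθ - b_sᵀθ + c_s` with `b_s = ∑_{r ≤ s} u_r z_r`, so its minimiser solves `Σ_s θ̂_s = b_s`
and `F_s(θ) = F_s(θ̂_s) + ½‖θ - θ̂_s‖²_{Σ_s}`. Going from `s - 1` to `s` adds `f_s` and
`z_s z_sᵀ`, and `Σ_s (θ̂_{s-1} - θ̂_s) = (⟨z_s, θ̂_{s-1}⟩ - u_s) z_s`, whence
`F_s(θ̂_s) = F_{s-1}(θ̂_{s-1}) + f_s(θ̂_{s-1}) (1 - ‖z_s‖²_{Σ_s⁻¹})`. Telescoping from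
`F_0(θ̂_0) = 0` and evaluating `F_t` at `θ*` gives the identity. -/

open Matrix Finset

variable {n : Type*} [Fintype n]

theorem Matrix.IsSymm.dotProduct_mulVec_comm {α : Type*} [CommSemiring α] {A : Matrix n n α}
    (hA : A.IsSymm) (x y : n → α) : x ⬝ᵥ A *ᵥ y = y ⬝ᵥ A *ᵥ x := by
  simpa only [hA.eq] using dotProduct_transpose_mulVec A x y

noncomputable def quadObjective (A : Matrix n n ℝ) (b : n → ℝ) (c : ℝ) (θ : n → ℝ) : ℝ :=
  1 / 2 * (θ ⬝ᵥ A *ᵥ θ) - b ⬝ᵥ θ + c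

theorem quadObjective_eq_add {A : Matrix n n ℝ} (hA : A.IsSymm) (b : n → ℝ) (c : ℝ)
    (θ θ' : n → ℝ) :
    quadObjective A b c θ = quadObjective A b c θ' + (θ - θ') ⬝ᵥ (A *ᵥ θ' - b)
      + 1 / 2 * ((θ - θ') ⬝ᵥ A *ᵥ (θ - θ')) := by
  simp only [quadObjective, sub_dotProduct, dotProduct_sub, mulVec_sub]
  linear_combination (1 / 2) * hA.dotProduct_mulVec_comm θ' θ + dotProduct_comm θ b
    - dotProduct_comm θ' b

theorem mulVec_eq_of_isMinOn_quadObjective {A : Matrix n n ℝ} (hA : A.IsSymm) {b : n → ℝ}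
    {c : ℝ} {θ₀ : n → ℝ} (hmin : IsMinOn (quadObjective A b c) Set.univ θ₀) :
    A *ᵥ θ₀ = b := by
  set g := A *ᵥ θ₀ - b
  have hline : ∀ x : ℝ, 0 ≤ (1 / 2 * (g ⬝ᵥ A *ᵥ g)) * (x * x) + (g ⬝ᵥ g) * x + 0 := by
    intro x
    have h := isMinOn_univ_iff.mp hmin (θ₀ + x • g)
    rw [quadObjective_eq_add hA b c (θ₀ + x • g) θ₀, add_sub_cancel_left] at h
    simp only [mulVec_smul, smul_dotProduct, dotProduct_smul, smul_eq_mul] at h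
    linarith
  have hg : g ⬝ᵥ g = 0 := by
    have := discrim_le_zero hline
    rw [discrim] at this
    nlinarith [sq_nonneg (g ⬝ᵥ g)]
  exact sub_eq_zero.mp (dotProduct_self_eq_zero.mp hg)

theorem quadObjective_eq_add_of_mulVec_eq {A : Matrix n n ℝ} (hA : A.IsSymm) {b : n → ℝ}
    (c : ℝ) {θ₀ : n → ℝ} (h : A *ᵥ θ₀ = b) (θ : n → ℝ) :
    quadObjective A b c θ = quadObjective A b c θ₀ + 1 / 2 * ((θ - θ₀) ⬝ᵥ A *ᵥ (θ - θ₀)) := by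
  rw [quadObjective_eq_add hA b c θ θ₀, h, sub_self, dotProduct_zero, add_zero]

theorem quadObjective_add_vecMulVec (A : Matrix n n ℝ) (b z : n → ℝ) (c u : ℝ) (θ : n → ℝ) :
    quadObjective (A + vecMulVec z z) (b + u • z) (c + u ^ 2 / 2) θ
      = quadObjective A b c θ + 1 / 2 * (z ⬝ᵥ θ - u) ^ 2 := by
  simp only [quadObjective, add_mulVec, vecMulVec_mulVec, op_smul_eq_smul, dotProduct_add,
    add_dotProduct, dotProduct_smul, smul_dotProduct, smul_eq_mul, dotProduct_comm θ z]
  ring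

theorem sum_sq_add_ridge_eq_quadObjective [DecidableEq n] {ι : Type*} (lam : ℝ) (S : Finset ι)
    (z : ι → n → ℝ) (u : ι → ℝ) (θ : n → ℝ) :
    ∑ r ∈ S, 1 / 2 * (z r ⬝ᵥ θ - u r) ^ 2 + lam / 2 * (θ ⬝ᵥ θ)
      = quadObjective (lam • 1 + ∑ r ∈ S, vecMulVec (z r) (z r)) (∑ r ∈ S, u r • z r)
          (∑ r ∈ S, u r ^ 2 / 2) θ := by
  classical
  induction S using Finset.induction_on with
  | empty =>
    simp only [sum_empty, quadObjective, add_zero, smul_mulVec, one_mulVec, dotProduct_smul,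
      smul_eq_mul, zero_dotProduct, sub_zero, zero_add]
    ring
  | insert a S ha ih =>
    rw [sum_insert ha, sum_insert ha, sum_insert ha, sum_insert ha, add_left_comm (lam • 1),
      add_comm (vecMulVec _ _), add_comm (u a • z a), add_comm (u a ^ 2 / 2),
      quadObjective_add_vecMulVec, ← ih]
    ring

theorem quadObjective_update [DecidableEq n] {A : Matrix n n ℝ} {b z θ θ' : n → ℝ} {c u : ℝ}
    (hsymm : (A + vecMulVec z z).IsSymm) (hdet : IsUnit (A + vecMulVec z z).det)
    (hθ : A *ᵥ θ = b) (hθ' : (A + vecMulVec z z) *ᵥ θ' = b + u • z) :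
    quadObjective (A + vecMulVec z z) (b + u • z) (c + u ^ 2 / 2) θ'
      = quadObjective A b c θ
        + 1 / 2 * (z ⬝ᵥ θ - u) ^ 2 * (1 - z ⬝ᵥ (A + vecMulVec z z)⁻¹ *ᵥ z) := by
  set A' := A + vecMulVec z z
  have hres : A' *ᵥ (θ - θ') = (z ⬝ᵥ θ - u) • z := by
    rw [mulVec_sub, hθ', add_mulVec, hθ, vecMulVec_mulVec, op_smul_eq_smul]
    module
  have hδ : θ - θ' = (z ⬝ᵥ θ - u) • A'⁻¹ *ᵥ z := by
    rw [← mulVec_smul, ← hres, mulVec_mulVec, nonsing_inv_mul _ hdet, one_mulVec]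
  have hexp := quadObjective_eq_add_of_mulVec_eq hsymm (c + u ^ 2 / 2) hθ' θ
  rw [quadObjective_add_vecMulVec, hres, hδ, smul_dotProduct, dotProduct_smul, smul_eq_mul,
    smul_eq_mul, dotProduct_comm _ z] at hexp
  linear_combination -hexp

theorem posDef_smul_one_add_sum_vecMulVec [DecidableEq n] {ι : Type*} {lam : ℝ}
    (hlam : 0 < lam) (S : Finset ι) (z : ι → n → ℝ) :
    (lam • 1 + ∑ r ∈ S, vecMulVec (z r) (z r)).PosDef :=
  (PosDef.one.smul hlam).add_posSemidef
    (posSemidef_sum S fun r _ => by simpa using posSemidef_vecMulVec_self_star (z r))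

theorem Finset.sum_Icc_one_eq_sub {M : Type*} [AddCommGroup M] {m g : ℕ → M}
    (h : ∀ k, m (k + 1) = m k + g (k + 1)) (t : ℕ) : ∑ s ∈ Icc 1 t, g s = m t - m 0 := by
  induction t with
  | zero => simp
  | succ k ih => rw [sum_Icc_succ_top (by omega), ih, h]; abel

/-- the FTRL regret equality for online ridge regression with
squared loss.  `θ̂_s` is the ridge-regression minimizer on the first `s`
samples (`θ̂_0 = 0`), `Σ_s = λI + Σ_{r=1}^s z_r z_rᵀ`, and for every comparator
`θ*`:
`Σ_{s=1}^t (f_s(θ̂_{s−1}) − f_s(θ*)) = (λ/2)‖θ*‖² + Σ_{s=1}^t f_s(θ̂_{s−1})‖z_s‖²_{Σ_s⁻¹} − ½‖θ* − θ̂_t‖²_{Σ_t}`. -/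
theorem regret_equality_online_ridge
    {d : ℕ} (t : ℕ) (z : ℕ → Fin d → ℝ) (u : ℕ → ℝ) (lam : ℝ) (hlam : 0 < lam)
    (f : ℕ → (Fin d → ℝ) → ℝ)
    (hf : ∀ s θ, f s θ = (1/2) * (z s ⬝ᵥ θ - u s)^2)
    (θhat : ℕ → Fin d → ℝ)
    (hθ0 : θhat 0 = 0)
    (hθ : ∀ s, IsMinOn (fun θ : Fin d → ℝ =>
        (∑ r ∈ Finset.Icc 1 s, f r θ) + (lam/2) * (θ ⬝ᵥ θ)) Set.univ (θhat s))
    (Sig : ℕ → Matrix (Fin d) (Fin d) ℝ)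
    (hSig : ∀ s, Sig s = lam • (1 : Matrix (Fin d) (Fin d) ℝ)
        + ∑ r ∈ Finset.Icc 1 s, vecMulVec (z r) (z r))
    (θstar : Fin d → ℝ) :
    ∑ s ∈ Finset.Icc 1 t, (f s (θhat (s-1)) - f s θstar)
      = (lam/2) * (θstar ⬝ᵥ θstar)
        + (∑ s ∈ Finset.Icc 1 t, f s (θhat (s-1)) * (z s ⬝ᵥ (Sig s)⁻¹.mulVec (z s)))
        - (1/2) * ((θstar - θhat t) ⬝ᵥ (Sig t).mulVec (θstar - θhat t)) := by
  set b : ℕ → Fin d → ℝ := fun s => ∑ r ∈ Icc 1 s, u r • z r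
  set c : ℕ → ℝ := fun s => ∑ r ∈ Icc 1 s, u r ^ 2 / 2
  have hobj : ∀ s, (fun θ => (∑ r ∈ Icc 1 s, f r θ) + lam / 2 * (θ ⬝ᵥ θ))
      = quadObjective (Sig s) (b s) (c s) := fun s => by
    funext θ
    simp only [hf, hSig]
    exact sum_sq_add_ridge_eq_quadObjective lam _ z u θ
  have hpd : ∀ s, (Sig s).PosDef := fun s => hSig s ▸ posDef_smul_one_add_sum_vecMulVec hlam _ z
  have hsymm : ∀ s, (Sig s).IsSymm := fun s => isHermitian_iff_isSymm.mp (hpd s).isHermitian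
  have hnormal : ∀ s, Sig s *ᵥ θhat s = b s := fun s =>
    mulVec_eq_of_isMinOn_quadObjective (hsymm s) (hobj s ▸ hθ s)
  have hstep : ∀ k, quadObjective (Sig (k + 1)) (b (k + 1)) (c (k + 1)) (θhat (k + 1))
      = quadObjective (Sig k) (b k) (c k) (θhat k)
        + f (k + 1) (θhat k) * (1 - z (k + 1) ⬝ᵥ (Sig (k + 1))⁻¹ *ᵥ z (k + 1)) := fun k => by
    have hSig' : Sig (k + 1) = Sig k + vecMulVec (z (k + 1)) (z (k + 1)) := by
      rw [hSig, hSig, sum_Icc_succ_top (by omega), add_assoc]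
    have hb' : b (k + 1) = b k + u (k + 1) • z (k + 1) := sum_Icc_succ_top (by omega) _
    have hc' : c (k + 1) = c k + u (k + 1) ^ 2 / 2 := sum_Icc_succ_top (by omega) _
    have hnormal' := hnormal (k + 1)
    rw [hSig', hb'] at hnormal' ⊢
    rw [hc', quadObjective_update (hSig' ▸ hsymm (k + 1))
      (hSig' ▸ (hpd (k + 1)).det_pos.ne'.isUnit) (hnormal k) hnormal', hf]
  have hmin_t : quadObjective (Sig t) (b t) (c t) (θhat t)
      = ∑ s ∈ Icc 1 t, f s (θhat (s - 1)) * (1 - z s ⬝ᵥ (Sig s)⁻¹ *ᵥ z s) := by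
    rw [sum_Icc_one_eq_sub (m := fun s => quadObjective (Sig s) (b s) (c s) (θhat s)) hstep, hθ0]
    simp [b, c, quadObjective]
  have hstar := quadObjective_eq_add_of_mulVec_eq (hsymm t) (c t) (hnormal t) θstar
  rw [← congrFun (hobj t) θstar, hmin_t] at hstar
  simp only [mul_one_sub, sum_sub_distrib] at hstar ⊢
  linarith
end
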